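/- Let M be a countable coarse group satisfying the negative-expression axiom and such that the product of full filters is associative. Then F(M), with the product x·y, the inverse x⁻¹, the identity 1 = {C ∈ M : U ⊑ C for some *subgroup U}, and the topology generated by the sets Â, is a Polish group: it is a topological group whose topology is Polish. -/

import Mathlib

/-! Abstract coarse groups (Nies–Schlicht–Tent). -/

namespace CoarsePaper

/-- A structure with one ternary relation `rel A B C`, read "AB ⊑ C". -/
structure CG (M : Type) : Type where
  rel : M → M → M → Prop

variable {M : Type}

/-- `U` is a *subgroup: `UU ⊑ U`. -/
def IsSub (c : CG M) (U : M) : Prop := c.rel U U U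

/-- For *subgroups, `U ⊑ V` means `UV ⊑ V`. -/
def sle (c : CG M) (U V : M) : Prop := c.rel U V V

/-- `A ∈ LC(U)`: `U` is the ⊑-maximum *subgroup with `AU ⊑ A`. -/
def LC (c : CG M) (U A : M) : Prop :=
  IsSub c U ∧ c.rel A U A ∧ ∀ V, IsSub c V → c.rel A V A → sle c V U

/-- `A ∈ RC(U)`: `U` is the ⊑-maximum *subgroup with `UA ⊑ A`. -/
def RC (c : CG M) (U A : M) : Prop :=
  IsSub c U ∧ c.rel U A A ∧ ∀ V, IsSub c V → c.rel V A A → sle c V U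

/-- `A ⊑ B` for arbitrary elements: `AU ⊑ B` for some *subgroup `U` with `A ∈ LC(U)`. -/
def cle (c : CG M) (A B : M) : Prop := ∃ U, LC c U A ∧ c.rel A U B

/-- `A`, `B` are disjoint: there are no `C`, `D` with `CD ⊑ A` and `CD ⊑ B`. -/
def Disj (c : CG M) (A B : M) : Prop := ¬ ∃ C D, c.rel C D A ∧ c.rel C D B

/-- `S(A,B)`: there is a *subgroup `V` with `A ∈ RC(V)`, `B ∈ LC(V)`, `AB ⊑ V`;
we then write `B = A⋄`. -/
def Srel (c : CG M) (A B : M) : Prop :=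
  ∃ V, RC c V A ∧ LC c V B ∧ c.rel A B V

/-- The axioms of a coarse group. -/
structure Axioms (c : CG M) : Prop where
  -- (0a) ⊑ is a partial order on *subgroups in which any two elements have a meet
  sle_refl : ∀ U, IsSub c U → sle c U U
  sle_antisymm : ∀ U V, IsSub c U → IsSub c V → sle c U V → sle c V U → U = V
  sle_trans : ∀ U V W, IsSub c U → IsSub c V → IsSub c W → sle c U V → sle c V W → sle c U W
  meet : ∀ U V, IsSub c U → IsSub c V → ∃ W, IsSub c W ∧ sle c W U ∧ sle c W V ∧
    ∀ T, IsSub c T → sle c T U → sle c T V → sle c T W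
  -- (0b) every element is a left *coset and a right *coset of some *subgroup
  exists_lc : ∀ A, ∃ U, LC c U A
  exists_rc : ∀ A, ∃ U, RC c U A
  -- (0c) ⊑ is a partial order on M extending ⊑ on *subgroups
  cle_refl : ∀ A, cle c A A
  cle_antisymm : ∀ A B, cle c A B → cle c B A → A = B
  cle_trans : ∀ A B C, cle c A B → cle c B C → cle c A C
  cle_ext : ∀ U V, IsSub c U → IsSub c V → (cle c U V ↔ sle c U V)
  -- (1)
  lc_up : ∀ U' U A', IsSub c U' → IsSub c U → sle c U' U → LC c U' A' →
    ∃ A, LC c U A ∧ cle c A' A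
  lc_disj : ∀ U' U A' A, IsSub c U' → IsSub c U → sle c U' U → LC c U' A' → LC c U A →
    cle c A' A ∨ Disj c A' A
  rc_up : ∀ U' U A', IsSub c U' → IsSub c U → sle c U' U → RC c U' A' →
    ∃ A, RC c U A ∧ cle c A' A
  rc_disj : ∀ U' U A' A, IsSub c U' → IsSub c U → sle c U' U → RC c U' A' → RC c U A →
    cle c A' A ∨ Disj c A' A
  -- (2) monotonicity
  mono : ∀ A₀ A₁ B₀ B₁ C, c.rel B₀ B₁ C → cle c A₀ B₀ → cle c A₁ B₁ → c.rel A₀ A₁ C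
  -- (3)
  lc_sub_iff : ∀ U V B, IsSub c U → IsSub c V → LC c V B →
    (sle c U V ↔ ∃ A, LC c U A ∧ cle c A B)
  rc_sub_iff : ∀ U V B, IsSub c U → IsSub c V → RC c V B →
    (sle c U V ↔ ∃ A, RC c U A ∧ cle c A B)
  -- (4) inverses
  srel_existsUnique : ∀ A, ∃! B, Srel c A B
  srel_symm : ∀ A B, Srel c A B → Srel c B A
  srel_orderIso : ∀ A B A' B', Srel c A A' → Srel c B B' → (cle c A B ↔ cle c A' B')
  -- (5) products of compatible *cosets
  prod_exists : ∀ U V W A B, RC c U A → LC c V A → RC c V B → LC c W B →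
    ∃ C, RC c U C ∧ LC c W C ∧ c.rel A B C ∧ ∀ D, c.rel A B D → cle c C D

/-- A full filter on `M`. -/
structure FullFilter (c : CG M) (x : Set M) : Prop where
  up : ∀ A ∈ x, ∀ B, cle c A B → B ∈ x
  directed : ∀ A ∈ x, ∀ B ∈ x, ∃ C ∈ x, cle c C A ∧ cle c C B
  lc_mem : ∀ U, IsSub c U → ∃ A ∈ x, LC c U A
  rc_mem : ∀ U, IsSub c U → ∃ A ∈ x, RC c U A

/-- The product of two filters: `x·y = {C : ∃ A ∈ x, B ∈ y, AB ⊑ C}`. -/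
def fprod (c : CG M) (x y : Set M) : Set M :=
  {C | ∃ A ∈ x, ∃ B ∈ y, c.rel A B C}

/-- The inverse of a filter: `x⁻¹ = {A⋄ : A ∈ x}`. -/
def finv (c : CG M) (x : Set M) : Set M :=
  {B | ∃ A ∈ x, Srel c A B}

/-- The identity filter: generated by the *subgroups. -/
def fone (c : CG M) : Set M := {C | ∃ U, IsSub c U ∧ cle c U C}

/-- The space `F(M)` of full filters on `M`. -/
abbrev FF (c : CG M) : Type := {x : Set M // FullFilter c x}

/-- The topology on `F(M)` generated by the sets `Â = {x : A ∈ x}`. -/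
def ffTop (c : CG M) : TopologicalSpace (FF c) :=
  TopologicalSpace.generateFrom {S | ∃ A : M, S = {x : FF c | A ∈ x.1}}

/-- `Â`, as a collection of subsets of `M`: the full filters containing `A`. -/
def hatS (c : CG M) (A : M) : Set (Set M) := {x | FullFilter c x ∧ A ∈ x}

/-- Associativity of the product of full filters. -/
def FAssoc (c : CG M) : Prop :=
  ∀ x y z : Set M, FullFilter c x → FullFilter c y → FullFilter c z →
    fprod c (fprod c x y) z = fprod c x (fprod c y z)

/-- The negative-expression axiom. -/
structure NegAx (c : CG M) : Prop where
  rel_iff : ∀ A B C, c.rel A B C ↔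
    ¬ ∃ D E F, cle c D A ∧ cle c E B ∧ c.rel D E F ∧ Disj c C F
  le_iff : ∀ A B, cle c A B ↔ ¬ ∃ C, cle c C A ∧ Disj c B C

/-- The action of a filter on a *coset: `x·A = B` iff `SA ⊑ B` for some `S ∈ x`. -/
def act (c : CG M) (x : Set M) (A B : M) : Prop := ∃ S ∈ x, c.rel S A B

/-- `𝒱 ⊆ F(M)` is a subgroup of the filter group `F(M)`. -/
def IsSubgroupFF (c : CG M) (V : Set (FF c)) : Prop :=
  (∀ z : FF c, z.1 = fone c → z ∈ V) ∧
  (∀ u ∈ V, ∀ v ∈ V, ∀ w : FF c, w.1 = fprod c u.1 v.1 → w ∈ V) ∧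
  (∀ u ∈ V, ∀ w : FF c, w.1 = finv c u.1 → w ∈ V)

/-- The union of double cosets `⋃_{i<n} V̂·Â_i`, as a collection of subsets of `M`
(the underlying sets of the full filters belonging to it). -/
def doubleUnion (c : CG M) (V : M) {n : ℕ} (A : Fin n → M) : Set (Set M) :=
  {z | ∃ i : Fin n, ∃ u v : Set M, FullFilter c u ∧ FullFilter c v ∧ V ∈ u ∧ A i ∈ v ∧
    z = fprod c u v}

/-- The coset-recognition axiom. -/
def CosetRec (c : CG M) : Prop :=
  ∀ V, IsSub c V → ∀ n : ℕ, 1 ≤ n → ∀ A : Fin n → M, (∀ i, LC c V (A i)) →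
    (fone c ∈ doubleUnion c V A ∧
     (∀ p ∈ doubleUnion c V A, ∀ q ∈ doubleUnion c V A, fprod c p q ∈ doubleUnion c V A) ∧
     (∀ p ∈ doubleUnion c V A, finv c p ∈ doubleUnion c V A)) →
    ∃ U, IsSub c U ∧ (∀ i, c.rel V (A i) U) ∧
      ∀ z : Set M, FullFilter c z → U ∈ z → z ∈ doubleUnion c V A

/-- Roelcke precompactness of the filter group `F(M)`: every open neighbourhood `𝒰` of the
identity satisfies `F(M) = 𝒰·F·𝒰` for some finite `F`. -/
def RoelckeFF (c : CG M) : Prop :=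
  ∀ U : Set (FF c), @IsOpen (FF c) (ffTop c) U → (∀ z : FF c, z.1 = fone c → z ∈ U) →
    ∃ F : Set (FF c), F.Finite ∧
      ∀ z : FF c, ∃ u ∈ U, ∃ f ∈ F, ∃ v ∈ U, z.1 = fprod c (fprod c u.1 f.1) v.1


/-!
Elements of a full filter can be shrunk, inside the filter, to *cosets of a common *subgroup,
where the least products of axiom (5) exist; this yields the closure properties of `F(M)` and
the group laws. The product `x·y` is upward closed because, by the negative-expression axiom,
`AB ⊑ C ⊑ C'` implies `AB ⊑ C'`.

A full filter contains a left *coset of every *subgroup, and two left *cosets of one *subgroup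
are equal or disjoint, so `A ∉ x` iff `x` contains an element disjoint from `A`. Hence the
complements of the sets `Â` are open as well, and `x ↦ (A ↦ [A ∈ x])` embeds `F(M)` into the
Cantor space `M → Bool`. Its image is cut out by countably many open conditions, so it is a
`G_δ`, and `G_δ` subspaces of Polish spaces are Polish.
-/

section PolishSpace

open Topology

theorem _root_.IsGδ.polishSpace {X : Type*} [TopologicalSpace X] [PolishSpace X] {s : Set X}
    (hs : IsGδ s) : PolishSpace s := by
  obtain ⟨U, hU, rfl⟩ := isGδ_iff_eq_iInter_nat.mp hs
  have := fun n => (hU n).polishSpace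
  -- `⋂ n, U n` is homeomorphic to a closed "diagonal" in the Polish space `X × ∏ n, U n`.
  let f : (⋂ n, U n) → X × ((n : ℕ) → U n) :=
    fun x => (x.1, fun n => ⟨x.1, Set.mem_iInter.mp x.2 n⟩)
  have hrange : Set.range f = ⋂ n, {p | (p.2 n).1 = p.1} := by
    ext ⟨y, u⟩
    simp only [Set.mem_iInter, Set.mem_ofPred_eq]
    refine ⟨?_, fun h => ⟨⟨y, Set.mem_iInter.mpr fun n => h n ▸ (u n).2⟩, ?_⟩⟩
    · rintro ⟨x, hx⟩ n
      simp only [f, Prod.mk.injEq] at hx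
      rw [← hx.1, ← hx.2]
    · exact Prod.ext rfl (funext fun n => Subtype.ext (h n).symm)
  refine IsClosedEmbedding.polishSpace (f := f) ⟨.of_comp (by fun_prop) continuous_fst
    IsEmbedding.subtypeVal, ?_⟩
  rw [hrange]
  exact isClosed_iInter fun n => isClosed_eq (by fun_prop) continuous_fst

theorem _root_.Topology.IsEmbedding.polishSpace_of_isGδ_range {X Y : Type*} [TopologicalSpace X]
    [TopologicalSpace Y] [PolishSpace Y] {f : X → Y} (hf : IsEmbedding f)
    (hrange : IsGδ (Set.range f)) : PolishSpace X :=
  have := hrange.polishSpace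
  hf.toHomeomorph.isClosedEmbedding.polishSpace

end PolishSpace

section CosetCalculus

variable {c : CG M}

theorem lc_unique (ax : Axioms c) {U V A : M} (hU : LC c U A) (hV : LC c V A) : U = V :=
  ax.sle_antisymm U V hU.1 hV.1 (hV.2.2 U hU.1 hU.2.1) (hU.2.2 V hV.1 hV.2.1)

theorem rc_unique (ax : Axioms c) {U V A : M} (hU : RC c U A) (hV : RC c V A) : U = V :=
  ax.sle_antisymm U V hU.1 hV.1 (hV.2.2 U hU.1 hU.2.1) (hU.2.2 V hV.1 hV.2.1)

theorem cle_of_sle (ax : Axioms c) {U V : M} (hU : IsSub c U) (hV : IsSub c V)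
    (h : sle c U V) : cle c U V :=
  (ax.cle_ext U V hU hV).mpr h

theorem rel_of_cle_of_lc (ax : Axioms c) {A B U : M} (h : cle c A B) (hU : LC c U A) :
    c.rel A U B := by
  obtain ⟨V, hV, hrel⟩ := h
  rwa [lc_unique ax hV hU] at hrel

theorem rc_self (ax : Axioms c) {U : M} (hU : IsSub c U) : RC c U U := by
  obtain ⟨V, hV⟩ := ax.exists_rc U
  obtain rfl : V = U := ax.sle_antisymm V U hV.1 hU hV.2.1 (hV.2.2 U hU hU)
  exact hV

/-- With `L` the *subgroup of which `U` is a left *coset, `U⋄` is a right *coset of `L` by (4),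
and a right *coset of `U` because `U⋄ = U·U⋄` by (5); hence `L = U`. -/
theorem lc_self (ax : Axioms c) {U : M} (hU : IsSub c U) : LC c U U := by
  obtain ⟨L, hL⟩ := ax.exists_lc U
  obtain ⟨B, hUB, -⟩ := ax.srel_existsUnique U
  obtain ⟨V, hVU, hVB, hUBV⟩ := id hUB
  obtain rfl : U = V := rc_unique ax (rc_self ax hU) hVU
  obtain ⟨L', hL'B, hL'U, -⟩ := ax.srel_symm U B hUB
  obtain rfl : L = L' := lc_unique ax hL hL'U
  obtain ⟨C, hCrc, hClc, -, hCleast⟩ := ax.prod_exists U L U U B (rc_self ax hU) hL hL'B hVB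
  have hCB : C = B := (ax.srel_existsUnique U).unique
    ⟨U, rc_self ax hU, hClc, ax.mono U C U U U hU (ax.cle_refl U) (hCleast U hUBV)⟩ hUB
  obtain rfl : U = L := rc_unique ax (hCB ▸ hCrc) hL'B
  exact hL

theorem Disj.symm {A B : M} (h : Disj c A B) : Disj c B A :=
  fun ⟨C, D, hA, hB⟩ => h ⟨C, D, hB, hA⟩

theorem not_disj_of_cle (ax : Axioms c) {A B E : M} (hEA : cle c E A) (hEB : cle c E B) :
    ¬ Disj c A B := by
  obtain ⟨U, hU, hEUA⟩ := hEA
  exact fun h => h ⟨E, U, hEUA, rel_of_cle_of_lc ax hEB hU⟩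

theorem lc_eq_of_cle (ax : Axioms c) {U A B : M} (hA : LC c U A) (hB : LC c U B)
    (h : cle c A B) : A = B := by
  rcases ax.lc_disj U U B A hB.1 hA.1 (ax.sle_refl U hB.1) hB hA with hBA | hd
  · exact ax.cle_antisymm A B h hBA
  · exact absurd hd.symm (not_disj_of_cle ax (ax.cle_refl A) h)

theorem exists_cle_cle_of_not_disj (ax : Axioms c) {A B : M} (h : ¬ Disj c A B) :
    ∃ E, cle c E A ∧ cle c E B := by
  obtain ⟨P, Q, hA, hB⟩ := not_not.mp h
  obtain ⟨L, hL⟩ := ax.exists_lc P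
  obtain ⟨R, hR⟩ := ax.exists_rc Q
  obtain ⟨W, hW, hWL, hWR, -⟩ := ax.meet L R hL.1 hR.1
  obtain ⟨P', hP', hP'P⟩ := (ax.lc_sub_iff W L P hW hL.1 hL).mp hWL
  obtain ⟨Q', hQ', hQ'Q⟩ := (ax.rc_sub_iff W R Q hW hR.1 hR).mp hWR
  obtain ⟨σ, hσ⟩ := ax.exists_rc P'
  obtain ⟨τ, hτ⟩ := ax.exists_lc Q'
  obtain ⟨E, -, -, -, hEleast⟩ := ax.prod_exists σ W τ P' Q' hσ hP' hQ' hτ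
  exact ⟨E, hEleast A (ax.mono P' Q' P Q A hA hP'P hQ'Q),
    hEleast B (ax.mono P' Q' P Q B hB hP'P hQ'Q)⟩

theorem Disj.mono_left (ax : Axioms c) {A A' B : M} (h : cle c A A') (hd : Disj c A' B) :
    Disj c A B := by
  intro hAB
  obtain ⟨E, hEA, hEB⟩ := exists_cle_cle_of_not_disj ax (not_not.mpr hAB)
  exact not_disj_of_cle ax (ax.cle_trans E A A' hEA h) hEB hd

theorem rel_mono_right (ax : Axioms c) (nax : NegAx c) {A B C C' : M} (h : c.rel A B C)
    (hC : cle c C C') : c.rel A B C' := by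
  rw [nax.rel_iff]
  rintro ⟨D, E, F, hD, hE, hF, hd⟩
  exact (nax.rel_iff A B C).mp h ⟨D, E, F, hD, hE, hF, hd.mono_left ax hC⟩

theorem cle_of_rel_of_rc (ax : Axioms c) {W B C : M} (hB : RC c W B) (h : c.rel W B C) :
    cle c B C := by
  obtain ⟨L, hL⟩ := ax.exists_lc B
  obtain ⟨G, -, hG, -, hGleast⟩ :=
    ax.prod_exists W W L W B (rc_self ax hB.1) (lc_self ax hB.1) hB hL
  obtain rfl : G = B := lc_eq_of_cle ax hG hL (hGleast B hB.2.1)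
  exact hGleast C h

theorem Srel.mem_fone_of_rel (ax : Axioms c) {A B C : M} (hAB : Srel c A B)
    (h : c.rel A B C) : C ∈ fone c := by
  obtain ⟨V, hVA, hVB, hABV⟩ := id hAB
  obtain ⟨W, hWB, hWA, -⟩ := ax.srel_symm A B hAB
  obtain ⟨G, -, hG, -, hGleast⟩ := ax.prod_exists V W V A B hVA hWA hWB hVB
  obtain rfl : G = V := lc_eq_of_cle ax hG (lc_self ax hVA.1) (hGleast V hABV)
  exact ⟨G, hVA.1, hGleast C h⟩

end CosetCalculus

section FullFilters

variable {c : CG M} {x y : Set M}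

theorem FullFilter.notMem_iff_exists_disj (ax : Axioms c) (hx : FullFilter c x) (A : M) :
    A ∉ x ↔ ∃ C ∈ x, Disj c A C := by
  constructor
  · intro hA
    obtain ⟨U, hU⟩ := ax.exists_lc A
    obtain ⟨B, hBx, hB⟩ := hx.lc_mem U hU.1
    rcases ax.lc_disj U U A B hU.1 hB.1 (ax.sle_refl U hU.1) hU hB with hAB | hd
    · exact absurd (lc_eq_of_cle ax hU hB hAB ▸ hBx) hA
    · exact ⟨B, hBx, hd⟩
  · rintro ⟨C, hCx, hd⟩ hAx
    obtain ⟨E, -, hEA, hEC⟩ := hx.directed A hAx C hCx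
    exact not_disj_of_cle ax hEA hEC hd

theorem FullFilter.exists_lc_cle (ax : Axioms c) (hx : FullFilter c x) {A U T : M}
    (hA : A ∈ x) (hU : LC c U A) (hT : IsSub c T) (hTU : sle c T U) :
    ∃ A' ∈ x, cle c A' A ∧ LC c T A' := by
  obtain ⟨B, hBx, hB⟩ := hx.lc_mem T hT
  obtain ⟨D, hDx, hDA, hDB⟩ := hx.directed A hA B hBx
  obtain ⟨V, hV⟩ := ax.exists_lc D
  have hVT : sle c V T := (ax.lc_sub_iff V T B hV.1 hT hB).mpr ⟨D, hV, hDB⟩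
  obtain ⟨A', hA', hDA'⟩ := ax.lc_up V T D hV.1 hT hVT hV
  rcases ax.lc_disj T U A' A hT hU.1 hTU hA' hU with hA'A | hd
  · exact ⟨A', hx.up D hDx A' hDA', hA'A, hA'⟩
  · exact absurd hd (not_disj_of_cle ax hDA' hDA)

theorem FullFilter.exists_rc_cle (ax : Axioms c) (hx : FullFilter c x) {A U T : M}
    (hA : A ∈ x) (hU : RC c U A) (hT : IsSub c T) (hTU : sle c T U) :
    ∃ A' ∈ x, cle c A' A ∧ RC c T A' := by
  obtain ⟨B, hBx, hB⟩ := hx.rc_mem T hT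
  obtain ⟨D, hDx, hDA, hDB⟩ := hx.directed A hA B hBx
  obtain ⟨V, hV⟩ := ax.exists_rc D
  have hVT : sle c V T := (ax.rc_sub_iff V T B hV.1 hT hB).mpr ⟨D, hV, hDB⟩
  obtain ⟨A', hA', hDA'⟩ := ax.rc_up V T D hV.1 hT hVT hV
  rcases ax.rc_disj T U A' A hT hU.1 hTU hA' hU with hA'A | hd
  · exact ⟨A', hx.up D hDx A' hDA', hA'A, hA'⟩
  · exact absurd hd (not_disj_of_cle ax hDA' hDA)

theorem FullFilter.exists_composable_cle (ax : Axioms c) (hx : FullFilter c x)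
    (hy : FullFilter c y) {A B : M} (hA : A ∈ x) (hB : B ∈ y) :
    ∃ W, ∃ A' ∈ x, ∃ B' ∈ y, cle c A' A ∧ cle c B' B ∧ LC c W A' ∧ RC c W B' := by
  obtain ⟨L, hL⟩ := ax.exists_lc A
  obtain ⟨R, hR⟩ := ax.exists_rc B
  obtain ⟨W, hW, hWL, hWR, -⟩ := ax.meet L R hL.1 hR.1
  obtain ⟨A', hA'x, hA'A, hA'⟩ := hx.exists_lc_cle ax hA hL hW hWL
  obtain ⟨B', hB'y, hB'B, hB'⟩ := hy.exists_rc_cle ax hB hR hW hWR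
  exact ⟨W, A', hA'x, B', hB'y, hA'A, hB'B, hA', hB'⟩

theorem fullFilter_fone (ax : Axioms c) : FullFilter c (fone c) where
  up A := fun ⟨U, hU, hUA⟩ B hAB => ⟨U, hU, ax.cle_trans U A B hUA hAB⟩
  directed A := fun ⟨U, hU, hUA⟩ B ⟨V, hV, hVB⟩ => by
    obtain ⟨W, hW, hWU, hWV, -⟩ := ax.meet U V hU hV
    exact ⟨W, ⟨W, hW, ax.cle_refl W⟩, ax.cle_trans W U A (cle_of_sle ax hW hU hWU) hUA,
      ax.cle_trans W V B (cle_of_sle ax hW hV hWV) hVB⟩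
  lc_mem U hU := ⟨U, ⟨U, hU, ax.cle_refl U⟩, lc_self ax hU⟩
  rc_mem U hU := ⟨U, ⟨U, hU, ax.cle_refl U⟩, rc_self ax hU⟩

theorem FullFilter.fprod (ax : Axioms c) (nax : NegAx c) (hx : FullFilter c x)
    (hy : FullFilter c y) : FullFilter c (fprod c x y) where
  up C := fun ⟨A, hA, B, hB, hABC⟩ C' hCC' => ⟨A, hA, B, hB, rel_mono_right ax nax hABC hCC'⟩
  directed C := fun ⟨A, hA, B, hB, hABC⟩ C' ⟨A', hA', B', hB', hABC'⟩ => by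
    obtain ⟨A₀, hA₀x, hA₀A, hA₀A'⟩ := hx.directed A hA A' hA'
    obtain ⟨B₀, hB₀y, hB₀B, hB₀B'⟩ := hy.directed B hB B' hB'
    obtain ⟨W, A₁, hA₁x, B₁, hB₁y, hA₁A₀, hB₁B₀, hA₁, hB₁⟩ :=
      hx.exists_composable_cle ax hy hA₀x hB₀y
    obtain ⟨σ, hσ⟩ := ax.exists_rc A₁
    obtain ⟨τ, hτ⟩ := ax.exists_lc B₁
    obtain ⟨E, -, -, hE, hEleast⟩ := ax.prod_exists σ W τ A₁ B₁ hσ hA₁ hB₁ hτ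
    exact ⟨E, ⟨A₁, hA₁x, B₁, hB₁y, hE⟩,
      hEleast C (ax.mono A₁ B₁ A B C hABC (ax.cle_trans A₁ A₀ A hA₁A₀ hA₀A)
        (ax.cle_trans B₁ B₀ B hB₁B₀ hB₀B)),
      hEleast C' (ax.mono A₁ B₁ A' B' C' hABC' (ax.cle_trans A₁ A₀ A' hA₁A₀ hA₀A')
        (ax.cle_trans B₁ B₀ B' hB₁B₀ hB₀B'))⟩
  lc_mem U hU := by
    obtain ⟨A₀, hA₀x, -⟩ := hx.lc_mem U hU
    obtain ⟨B₀, hB₀y, hB₀⟩ := hy.lc_mem U hU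
    obtain ⟨W, A₁, hA₁x, B₁, hB₁y, -, hB₁B₀, hA₁, hB₁⟩ :=
      hx.exists_composable_cle ax hy hA₀x hB₀y
    obtain ⟨σ, hσ⟩ := ax.exists_rc A₁
    obtain ⟨τ, hτ⟩ := ax.exists_lc B₁
    obtain ⟨C, -, hC, hA₁B₁C, -⟩ := ax.prod_exists σ W τ A₁ B₁ hσ hA₁ hB₁ hτ
    have hτU : sle c τ U := (ax.lc_sub_iff τ U B₀ hτ.1 hU hB₀).mpr ⟨B₁, hτ, hB₁B₀⟩
    obtain ⟨C', hC', hCC'⟩ := ax.lc_up τ U C hτ.1 hU hτU hC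
    exact ⟨C', ⟨A₁, hA₁x, B₁, hB₁y, rel_mono_right ax nax hA₁B₁C hCC'⟩, hC'⟩
  rc_mem U hU := by
    obtain ⟨A₀, hA₀x, hA₀⟩ := hx.rc_mem U hU
    obtain ⟨B₀, hB₀y, -⟩ := hy.rc_mem U hU
    obtain ⟨W, A₁, hA₁x, B₁, hB₁y, hA₁A₀, -, hA₁, hB₁⟩ :=
      hx.exists_composable_cle ax hy hA₀x hB₀y
    obtain ⟨σ, hσ⟩ := ax.exists_rc A₁
    obtain ⟨τ, hτ⟩ := ax.exists_lc B₁
    obtain ⟨C, hC, -, hA₁B₁C, -⟩ := ax.prod_exists σ W τ A₁ B₁ hσ hA₁ hB₁ hτ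
    have hσU : sle c σ U := (ax.rc_sub_iff σ U A₀ hσ.1 hU hA₀).mpr ⟨A₁, hσ, hA₁A₀⟩
    obtain ⟨C', hC', hCC'⟩ := ax.rc_up σ U C hσ.1 hU hσU hC
    exact ⟨C', ⟨A₁, hA₁x, B₁, hB₁y, rel_mono_right ax nax hA₁B₁C hCC'⟩, hC'⟩

theorem FullFilter.finv (ax : Axioms c) (hx : FullFilter c x) : FullFilter c (finv c x) where
  up B := fun ⟨A, hA, hAB⟩ B' hBB' => by
    obtain ⟨A', hA'B', -⟩ := ax.srel_existsUnique B'
    have hB'A' := ax.srel_symm B' A' hA'B'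
    exact ⟨A', hx.up A hA A' ((ax.srel_orderIso A A' B B' hAB hB'A').mpr hBB'), hB'A'⟩
  directed B := fun ⟨A, hA, hAB⟩ B' ⟨A', hA', hA'B'⟩ => by
    obtain ⟨D, hD, hDA, hDA'⟩ := hx.directed A hA A' hA'
    obtain ⟨E, hDE, -⟩ := ax.srel_existsUnique D
    exact ⟨E, ⟨D, hD, hDE⟩, (ax.srel_orderIso D A E B hDE hAB).mp hDA,
      (ax.srel_orderIso D A' E B' hDE hA'B').mp hDA'⟩
  lc_mem U hU := by
    obtain ⟨A, hAx, hA⟩ := hx.rc_mem U hU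
    obtain ⟨B, hAB, -⟩ := ax.srel_existsUnique A
    obtain ⟨V, hVA, hVB, -⟩ := id hAB
    exact ⟨B, ⟨A, hAx, hAB⟩, rc_unique ax hVA hA ▸ hVB⟩
  rc_mem U hU := by
    obtain ⟨A, hAx, hA⟩ := hx.lc_mem U hU
    obtain ⟨B, hAB, -⟩ := ax.srel_existsUnique A
    obtain ⟨V, hVB, hVA, -⟩ := ax.srel_symm A B hAB
    exact ⟨B, ⟨A, hAx, hAB⟩, lc_unique ax hVA hA ▸ hVB⟩

theorem fone_fprod (ax : Axioms c) (hx : FullFilter c x) : fprod c (fone c) x = x := by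
  ext C
  constructor
  · rintro ⟨A, ⟨U, hU, hUA⟩, B, hB, hABC⟩
    obtain ⟨R, hR⟩ := ax.exists_rc B
    obtain ⟨W, hW, hWU, hWR, -⟩ := ax.meet U R hU hR.1
    obtain ⟨B', hB'x, hB'B, hB'⟩ := hx.exists_rc_cle ax hB hR hW hWR
    exact hx.up B' hB'x C <| cle_of_rel_of_rc ax hB' <|
      ax.mono W B' A B C hABC (ax.cle_trans W U A (cle_of_sle ax hW hU hWU) hUA) hB'B
  · intro hC
    obtain ⟨R, hR⟩ := ax.exists_rc C
    exact ⟨R, ⟨R, hR.1, ax.cle_refl R⟩, C, hC, hR.2.1⟩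

theorem fprod_fone (ax : Axioms c) (hx : FullFilter c x) : fprod c x (fone c) = x := by
  ext C
  constructor
  · rintro ⟨A, hA, B, ⟨U, hU, hUB⟩, hABC⟩
    obtain ⟨L, hL⟩ := ax.exists_lc A
    obtain ⟨W, hW, hWL, hWU, -⟩ := ax.meet L U hL.1 hU
    obtain ⟨A', hA'x, hA'A, hA'⟩ := hx.exists_lc_cle ax hA hL hW hWL
    exact hx.up A' hA'x C
      ⟨W, hA', ax.mono A' W A B C hABC hA'A (ax.cle_trans W U B (cle_of_sle ax hW hU hWU) hUB)⟩
  · intro hC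
    obtain ⟨L, hL⟩ := ax.exists_lc C
    exact ⟨C, hC, L, ⟨L, hL.1, ax.cle_refl L⟩, hL.2.1⟩

theorem finv_fprod (ax : Axioms c) (nax : NegAx c) (hx : FullFilter c x) :
    fprod c (finv c x) x = fone c := by
  ext C
  constructor
  · rintro ⟨A', ⟨A, hA, hAA'⟩, B, hB, hA'BC⟩
    obtain ⟨D, -, hDA, hDB⟩ := hx.directed A hA B hB
    obtain ⟨D', hDD', -⟩ := ax.srel_existsUnique D
    have hD'A' : cle c D' A' := (ax.srel_orderIso D A D' A' hDD' hAA').mp hDA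
    exact (ax.srel_symm D D' hDD').mem_fone_of_rel ax (ax.mono D' D A' B C hA'BC hD'A' hDB)
  · rintro ⟨U, hU, hUC⟩
    obtain ⟨B, hBx, hB⟩ := hx.lc_mem U hU
    obtain ⟨B', hBB', -⟩ := ax.srel_existsUnique B
    obtain ⟨V, -, hVB, hB'BV⟩ := ax.srel_symm B B' hBB'
    obtain rfl : V = U := lc_unique ax hVB hB
    exact ⟨B', ⟨B, hBx, hBB'⟩, B, hBx, rel_mono_right ax nax hB'BV hUC⟩

theorem fprod_finv (ax : Axioms c) (nax : NegAx c) (hx : FullFilter c x) :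
    fprod c x (finv c x) = fone c := by
  ext C
  constructor
  · rintro ⟨A, hA, B', ⟨B, hB, hBB'⟩, hAB'C⟩
    obtain ⟨D, -, hDA, hDB⟩ := hx.directed A hA B hB
    obtain ⟨D', hDD', -⟩ := ax.srel_existsUnique D
    have hD'B' : cle c D' B' := (ax.srel_orderIso D B D' B' hDD' hBB').mp hDB
    exact hDD'.mem_fone_of_rel ax (ax.mono D D' A B' C hAB'C hDA hD'B')
  · rintro ⟨U, hU, hUC⟩
    obtain ⟨B, hBx, hB⟩ := hx.rc_mem U hU
    obtain ⟨B', hBB', -⟩ := ax.srel_existsUnique B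
    obtain ⟨V, hVB, -, hBB'V⟩ := id hBB'
    obtain rfl : V = U := rc_unique ax hVB hB
    exact ⟨B, hBx, B', ⟨B, hBx, hBB'⟩, rel_mono_right ax nax hBB'V hUC⟩

end FullFilters

section Topology

open Topology TopologicalSpace

attribute [local instance] ffTop

variable {c : CG M}

theorem isOpen_setOf_mem (A : M) : IsOpen {x : FF c | A ∈ x.1} :=
  GenerateOpen.basic _ ⟨A, rfl⟩

theorem isOpen_setOf_notMem (ax : Axioms c) (A : M) : IsOpen {x : FF c | A ∉ x.1} := by
  have : {x : FF c | A ∉ x.1} = ⋃ C, ⋃ (_ : Disj c A C), {x : FF c | C ∈ x.1} := by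
    ext x
    simp [x.2.notMem_iff_exists_disj ax A, and_comm]
  rw [this]
  exact isOpen_iUnion fun C => isOpen_iUnion fun _ => isOpen_setOf_mem C

theorem continuous_ff_iff {X : Type*} [TopologicalSpace X] {f : X → FF c} :
    Continuous f ↔ ∀ A, IsOpen {p | A ∈ (f p).1} := by
  refine continuous_generateFrom_iff.trans ⟨fun h A => h _ ⟨A, rfl⟩, ?_⟩
  rintro h _ ⟨A, rfl⟩
  exact h A

theorem continuous_fprod (ax : Axioms c) (nax : NegAx c) :
    Continuous fun p : FF c × FF c =>
      (⟨fprod c p.1.1 p.2.1, p.1.2.fprod ax nax p.2.2⟩ : FF c) := by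
  refine continuous_ff_iff.mpr fun C => ?_
  have : {p : FF c × FF c | C ∈ fprod c p.1.1 p.2.1} =
      ⋃ A, ⋃ B, ⋃ (_ : c.rel A B C), {x : FF c | A ∈ x.1} ×ˢ {y : FF c | B ∈ y.1} := by
    ext p
    simp only [fprod, Set.mem_ofPred_eq, Set.mem_iUnion, Set.mem_prod]
    grind
  rw [this]
  exact isOpen_iUnion fun A => isOpen_iUnion fun B => isOpen_iUnion fun _ =>
    (isOpen_setOf_mem A).prod (isOpen_setOf_mem B)

theorem continuous_finv (ax : Axioms c) :
    Continuous fun x : FF c => (⟨finv c x.1, x.2.finv ax⟩ : FF c) := by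
  refine continuous_ff_iff.mpr fun B => ?_
  have : {x : FF c | B ∈ finv c x.1} = ⋃ A, ⋃ (_ : Srel c A B), {x : FF c | A ∈ x.1} := by
    ext x
    simp only [finv, Set.mem_ofPred_eq, Set.mem_iUnion]
    grind
  rw [this]
  exact isOpen_iUnion fun A => isOpen_iUnion fun _ => isOpen_setOf_mem A

open Classical in
noncomputable def toCantor (c : CG M) (x : FF c) : M → Bool := fun A => decide (A ∈ x.1)

theorem isEmbedding_toCantor (ax : Axioms c) : IsEmbedding (toCantor c) := by
  have hcont : Continuous (toCantor c) :=
    continuous_pi fun A => continuous_discrete_rng.mpr fun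
      | true => by convert isOpen_setOf_mem A using 1; ext; simp [toCantor]
      | false => by convert isOpen_setOf_notMem ax A using 1; ext; simp [toCantor]
  refine ⟨⟨le_antisymm (continuous_iff_le_induced.mp hcont) (le_generateFrom ?_)⟩, ?_⟩
  · rintro _ ⟨A, rfl⟩
    refine isOpen_induced_iff.mpr ⟨(· A) ⁻¹' {true}, ?_, by ext; simp [toCantor]⟩
    exact (continuous_apply A).isOpen_preimage _ (isOpen_discrete _)
  · intro x y h
    exact Subtype.ext (Set.ext fun A => by simpa [toCantor] using congrFun h A)

theorem range_toCantor :
    Set.range (toCantor c) = {f : M → Bool | FullFilter c {A | f A = true}} := by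
  ext f
  refine ⟨?_, fun hf => ⟨⟨_, hf⟩, funext fun A => by simp [toCantor]⟩⟩
  rintro ⟨x, rfl⟩
  simpa [toCantor] using x.2

theorem isGδ_setOf_fullFilter [Countable M] :
    IsGδ {f : M → Bool | FullFilter c {A | f A = true}} := by
  have hmem (A : M) : IsClopen {f : M → Bool | f A = true} :=
    (isClopen_discrete {true}).preimage (continuous_apply A)
  have hexists (P : M → Prop) : IsOpen {f : M → Bool | ∃ C, f C = true ∧ P C} := by
    simp only [Set.ofPred_exists, Set.ofPred_and]
    exact isOpen_iUnion fun C => (hmem C).isOpen.inter isOpen_const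
  have himp {s t : Set (M → Bool)} (hs : IsClosed s) (ht : IsOpen t) :
      IsOpen {f | f ∈ s → f ∈ t} := by
    simp only [imp_iff_not_or]
    exact hs.isOpen_compl.union ht
  have : {f : M → Bool | FullFilter c {A | f A = true}} =
      (⋂ p : {p : M × M // cle c p.1 p.2}, {f | f p.1.1 = true → f p.1.2 = true}) ∩
      (⋂ p : M × M, {f | f p.1 = true → f p.2 = true →
        ∃ C, f C = true ∧ cle c C p.1 ∧ cle c C p.2}) ∩
      (⋂ U : {U // IsSub c U}, {f | ∃ A, f A = true ∧ LC c U A}) ∩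
      (⋂ U : {U // IsSub c U}, {f | ∃ A, f A = true ∧ RC c U A}) := by
    ext f
    simp only [Set.mem_inter_iff, Set.mem_iInter, Set.mem_ofPred_eq, Subtype.forall,
      Prod.forall]
    constructor
    · rintro ⟨hup, hdir, hlc, hrc⟩
      exact ⟨⟨⟨fun A B hAB hA => hup A hA B hAB, fun A B hA => hdir A hA B⟩, hlc⟩, hrc⟩
    · rintro ⟨⟨⟨hup, hdir⟩, hlc⟩, hrc⟩
      exact ⟨fun A hA B hAB => hup A B hAB hA, fun A hA B => hdir A B hA, hlc, hrc⟩
  rw [this]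
  refine .inter (.inter (.inter ?_ ?_) ?_) ?_ <;> refine .iInter_of_isOpen fun p => ?_
  · exact himp (hmem _).isClosed (hmem _).isOpen
  · exact himp (hmem _).isClosed (himp (hmem _).isClosed (hexists _))
  · exact hexists _
  · exact hexists _

theorem polishSpace_ff [Countable M] (ax : Axioms c) : PolishSpace (FF c) :=
  have : IsCompletelyMetrizableSpace (M → Bool) := inferInstance
  (isEmbedding_toCantor ax).polishSpace_of_isGδ_range
    (range_toCantor (c := c) ▸ isGδ_setOf_fullFilter)

end Topology


/-- `F(M)` with the filter product, inverse, identity and the topology generated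
by the sets `Â` is a Polish group. -/
theorem stmt8 (c : CG M) [Countable M] (ax : Axioms c) (nax : NegAx c) (hassoc : FAssoc c) :
    ∃ (mul : FF c → FF c → FF c) (inv : FF c → FF c) (one : FF c),
      (∀ x y, (mul x y).1 = fprod c x.1 y.1) ∧
      (∀ x, (inv x).1 = finv c x.1) ∧
      one.1 = fone c ∧
      (∀ x y z, mul (mul x y) z = mul x (mul y z)) ∧
      (∀ x, mul one x = x) ∧ (∀ x, mul x one = x) ∧
      (∀ x, mul (inv x) x = one) ∧ (∀ x, mul x (inv x) = one) ∧
      (letI := ffTop c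
       Continuous (fun p : FF c × FF c => mul p.1 p.2) ∧ Continuous inv ∧
         PolishSpace (FF c)) := by
  refine ⟨fun x y => ⟨fprod c x.1 y.1, x.2.fprod ax nax y.2⟩, fun x => ⟨finv c x.1, x.2.finv ax⟩,
    ⟨fone c, fullFilter_fone ax⟩, fun _ _ => rfl, fun _ => rfl, rfl, fun x y z => ?_,
    fun x => ?_, fun x => ?_, fun x => ?_, fun x => ?_,
    continuous_fprod ax nax, continuous_finv ax, polishSpace_ff ax⟩
  · exact Subtype.ext (hassoc x.1 y.1 z.1 x.2 y.2 z.2)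
  · exact Subtype.ext (fone_fprod ax x.2)
  · exact Subtype.ext (fprod_fone ax x.2)
  · exact Subtype.ext (finv_fprod ax nax x.2)
  · exact Subtype.ext (fprod_finv ax nax x.2)

end CoarsePaper
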